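/- arXiv:1510.05098 — 4 statements merged into one kernel-verified Lean document; each statement's English description precedes it below -/
import Mathlib

section
/- Let S be a commutative ring, R an S-algebra, E an injective cogenerator of the category of S-modules, and write (-)^d = Hom_S(-,E) for the induced contravariant functors between left R-modules and right R-modules. Let P₂ → P₁ →ζ→ P₀ → M → 0 be an exact sequence of left R-modules with P₀, P₁, P₂ projective. If a right R-module X belongs to 𝓑_{ζ^d}, where ζ^d : P₀^d → P₁^d, then the left R-module X^d belongs to 𝒟_ζ. -/
universe u u' v

open Function

section Classes

variable (A : Type u') [Ring A]

/-- `X ∈ 𝓑_ζ`: every map `X → Q₁` factors through `ζ`. -/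
def MemB {Q₀ Q₁ : Type v} [AddCommGroup Q₀] [Module A Q₀] [AddCommGroup Q₁] [Module A Q₁]
    (ζ : Q₀ →ₗ[A] Q₁) (X : Type v) [AddCommGroup X] [Module A X] : Prop :=
  Surjective fun g : X →ₗ[A] Q₀ => ζ ∘ₗ g

/-- `Y ∈ 𝒟_ζ`: every map `P₁ → Y` factors through `ζ`. -/
def MemD {P₁ P₀ : Type v} [AddCommGroup P₁] [Module A P₁] [AddCommGroup P₀] [Module A P₀]
    (ζ : P₁ →ₗ[A] P₀) (Y : Type v) [AddCommGroup Y] [Module A Y] : Prop :=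
  Surjective fun g : P₀ →ₗ[A] Y => g ∘ₗ ζ

/-- `X ∈ Cogen T`: `X` embeds into a direct product of copies of `T`. -/
def MemCogen (T : Type v) [AddCommGroup T] [Module A T]
    (X : Type v) [AddCommGroup X] [Module A X] : Prop :=
  ∃ (ι : Type v) (f : X →ₗ[A] (ι → T)), Injective f

/-- `Y ∈ Gen M`: `Y` is an epimorphic image of a direct sum of copies of `M`. -/
def MemGen (M : Type v) [AddCommGroup M] [Module A M]
    (Y : Type v) [AddCommGroup Y] [Module A Y] : Prop :=
  ∃ (ι : Type v) (p : (ι →₀ M) →ₗ[A] Y), Surjective p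

end Classes

section Duality

variable (S : Type u) [CommRing S] (R : Type u') [Ring R] [Algebra S R]
variable (E : Type v) [AddCommGroup E] [Module S E]

/-- The right `R`-module (i.e. `Rᵐᵒᵖ`-module) structure on the dual `Hom_S(M, E)` of a
left `R`-module `M`, given by `(f • r) m = f (r • m)`. -/
instance leftDualModule (M : Type v) [AddCommGroup M] [Module S M] [Module R M]
    [IsScalarTower S R M] : Module Rᵐᵒᵖ (M →ₗ[S] E) where
  smul r f := f ∘ₗ DistribMulAction.toLinearMap S M r.unop
  one_smul f := by ext m; exact congrArg f (one_smul R m)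
  mul_smul r r' f := by ext m; exact congrArg f (mul_smul r'.unop r.unop m)
  smul_zero r := rfl
  smul_add r f g := rfl
  add_smul r r' f := by ext m; exact congrArg f (add_smul r.unop r'.unop m) ▸ map_add f _ _
  zero_smul f := by ext m; exact (congrArg f (zero_smul R m)).trans (map_zero f)

/-- The left `R`-module structure on the dual `Hom_S(X, E)` of a right `R`-module
(i.e. `Rᵐᵒᵖ`-module) `X`, given by `(r • f) x = f (x • r)`. -/
instance rightDualModule (X : Type v) [AddCommGroup X] [Module S X] [Module Rᵐᵒᵖ X]
    [IsScalarTower S Rᵐᵒᵖ X] : Module R (X →ₗ[S] E) where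
  smul r f := f ∘ₗ DistribMulAction.toLinearMap S X (MulOpposite.op r)
  one_smul f := by ext x; exact congrArg f (one_smul Rᵐᵒᵖ x)
  mul_smul r r' f := by
    ext x
    exact congrArg f (mul_smul (MulOpposite.op r') (MulOpposite.op r) x)
  smul_zero r := rfl
  smul_add r f g := rfl
  add_smul r r' f := by
    ext x
    exact congrArg f (add_smul (MulOpposite.op r) (MulOpposite.op r') x) ▸ map_add f _ _
  zero_smul f := by ext x; exact (congrArg f (zero_smul Rᵐᵒᵖ x)).trans (map_zero f)

/-- The dual `ζ^d : Hom_S(P₀, E) → Hom_S(P₁, E)` of a homomorphism `ζ : P₁ → P₀` of left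
`R`-modules, as a homomorphism of right `R`-modules (i.e. of `Rᵐᵒᵖ`-modules). -/
def dualMap {P₁ P₀ : Type v} [AddCommGroup P₁] [Module S P₁] [Module R P₁] [IsScalarTower S R P₁]
    [AddCommGroup P₀] [Module S P₀] [Module R P₀] [IsScalarTower S R P₀]
    (ζ : P₁ →ₗ[R] P₀) : (P₀ →ₗ[S] E) →ₗ[Rᵐᵒᵖ] (P₁ →ₗ[S] E) where
  toFun f := f ∘ₗ (ζ.restrictScalars S)
  map_add' f g := rfl
  map_smul' r f := by ext x; exact congrArg f (map_smul ζ r.unop x).symm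

end Duality

/-- If `P₂ → P₁ →ζ→ P₀ → M → 0` is a projective presentation of the left `R`-module `M`
and the right `R`-module `X` belongs to `𝓑_{ζ^d}`, then `X^d ∈ 𝒟_ζ`. -/
theorem stmt_9 {S : Type u} [CommRing S] {R : Type u'} [Ring R] [Algebra S R]
    (E : Type v) [AddCommGroup E] [Module S E] [Module.Injective S E]
    (hcog : ∀ (N : Type v) [AddCommGroup N] [Module S N],
      ∃ (ι : Type v) (f : N →ₗ[S] (ι → E)), Injective f)
    (P₂ P₁ P₀ M : Type v)
    [AddCommGroup P₂] [Module R P₂] [Module.Projective R P₂]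
    [AddCommGroup P₁] [Module S P₁] [Module R P₁] [IsScalarTower S R P₁]
    [Module.Projective R P₁]
    [AddCommGroup P₀] [Module S P₀] [Module R P₀] [IsScalarTower S R P₀]
    [Module.Projective R P₀]
    [AddCommGroup M] [Module R M]
    (d : P₂ →ₗ[R] P₁) (ζ : P₁ →ₗ[R] P₀) (π : P₀ →ₗ[R] M)
    (hπ : Surjective π) (hexζ : LinearMap.range ζ = LinearMap.ker π)
    (hexd : LinearMap.range d = LinearMap.ker ζ)
    (X : Type v) [AddCommGroup X] [Module S X] [Module Rᵐᵒᵖ X] [IsScalarTower S Rᵐᵒᵖ X]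
    (hX : MemB Rᵐᵒᵖ (dualMap S R E ζ) X) :
    MemD R ζ (X →ₗ[S] E) := by
  intro h
  -- transpose of h : X →ₗ[Rᵐᵒᵖ] (P₁ →ₗ[S] E)
  have key : ∀ (s : S) (x : X), MulOpposite.op (algebraMap S R s) • x = s • x := by
    intro s x
    rw [← algebraMap_smul Rᵐᵒᵖ s x]
    rfl
  let ht : X →ₗ[Rᵐᵒᵖ] (P₁ →ₗ[S] E) :=
    { toFun := fun x =>
        { toFun := fun p => h p x
          map_add' := fun p q => by show h (p + q) x = h p x + h q x; rw [map_add]; rfl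
          map_smul' := fun s p => by
            show h (s • p) x = s • h p x
            rw [← algebraMap_smul R s p, map_smul]
            show h p (MulOpposite.op (algebraMap S R s) • x) = s • h p x
            rw [key, map_smul] }
      map_add' := fun x y => by ext p; exact map_add (h p) x y
      map_smul' := fun r x => by
        ext p
        show h p (r • x) = h (r.unop • p) x
        rw [map_smul h r.unop p]
        rfl }
  obtain ⟨gt, hgt⟩ := hX ht
  let g : P₀ →ₗ[R] (X →ₗ[S] E) :=
    { toFun := fun p₀ =>
        { toFun := fun x => gt x p₀
          map_add' := fun x y => by show gt (x + y) p₀ = gt x p₀ + gt y p₀; rw [map_add]; rfl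
          map_smul' := fun s x => by
            show gt (s • x) p₀ = s • gt x p₀
            rw [← algebraMap_smul Rᵐᵒᵖ s x, map_smul]
            show gt x (algebraMap S R s • p₀) = s • gt x p₀
            rw [algebraMap_smul, map_smul] }
      map_add' := fun p₀ q₀ => by ext x; exact map_add (gt x) p₀ q₀
      map_smul' := fun r p₀ => by
        ext x
        show gt x (r • p₀) = gt (MulOpposite.op r • x) p₀
        rw [map_smul gt (MulOpposite.op r) x]
        rfl }
  refine ⟨g, ?_⟩
  ext p₁ x
  exact congrArg (fun f => f x p₁) hgt
end

section
/- Let S be a commutative ring, R an S-algebra, E an injective cogenerator of the category of S-modules, and write (-)^d = Hom_S(-,E) for the induced contravariant functors between left R-modules and right R-modules. Let P₂ → P₁ →ζ→ P₀ → M → 0 be an exact sequence of left R-modules with P₀, P₁, P₂ finitely presented projective. If a left R-module Y belongs to 𝒟_ζ, then the right R-module Y^d belongs to 𝓑_{ζ^d}, where ζ^d : P₀^d → P₁^d. -/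
universe u u' v

open Function

section Aux

variable {S : Type u} [CommRing S] {R : Type u'} [Ring R] [Algebra S R]
variable {E : Type v} [AddCommGroup E] [Module S E]
variable {P Y : Type v} [AddCommGroup P] [Module R P]
  [AddCommGroup Y] [Module S Y] [Module R Y] [IsScalarTower S R Y]

/-- Evaluation pairing: `f ↦ φ (f p)` as an `S`-linear map `Hom_R(P, Y) →ₗ[S] E`. -/
def evalPair (φ : Y →ₗ[S] E) (p : P) : (P →ₗ[R] Y) →ₗ[S] E where
  toFun f := φ (f p)
  map_add' f f' := by simp
  map_smul' c f := by simp

@[simp] lemma evalPair_apply (φ : Y →ₗ[S] E) (p : P) (f : P →ₗ[R] Y) :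
    evalPair (R := R) φ p f = φ (f p) := rfl

/-- `y ↦ (p ↦ s p i • y)` as an `S`-linear map `Y →ₗ[S] Hom_R(P, Y)`. -/
def tauMap {n : ℕ} (s : P →ₗ[R] (Fin n → R)) (i : Fin n) : Y →ₗ[S] (P →ₗ[R] Y) where
  toFun y :=
    { toFun := fun p => s p i • y
      map_add' := fun p p' => by simp [add_smul]
      map_smul' := fun r p => by simp [mul_smul] }
  map_add' y y' := by
    ext p
    show s p i • (y + y') = s p i • y + s p i • y'
    rw [smul_add]
  map_smul' c y := by
    ext p
    show s p i • c • y = c • (s p i • y)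
    rw [smul_comm]

@[simp] lemma tauMap_apply {n : ℕ} (s : P →ₗ[R] (Fin n → R)) (i : Fin n) (y : Y) (p : P) :
    tauMap (S := S) s i y p = s p i • y := rfl

end Aux


/-- If `P₂ → P₁ →ζ→ P₀ → M → 0` is a projective presentation of the left `R`-module `M` by
finitely presented projectives and the left `R`-module `Y` belongs to `𝒟_ζ`,
then `Y^d ∈ 𝓑_{ζ^d}`. -/
theorem stmt_10 {S : Type u} [CommRing S] {R : Type u'} [Ring R] [Algebra S R]
    (E : Type v) [AddCommGroup E] [Module S E] [Module.Injective S E]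
    (hcog : ∀ (N : Type v) [AddCommGroup N] [Module S N],
      ∃ (ι : Type v) (f : N →ₗ[S] (ι → E)), Injective f)
    (P₂ P₁ P₀ M : Type v)
    [AddCommGroup P₂] [Module R P₂] [Module.Projective R P₂] [Module.FinitePresentation R P₂]
    [AddCommGroup P₁] [Module S P₁] [Module R P₁] [IsScalarTower S R P₁]
    [Module.Projective R P₁] [Module.FinitePresentation R P₁]
    [AddCommGroup P₀] [Module S P₀] [Module R P₀] [IsScalarTower S R P₀]
    [Module.Projective R P₀] [Module.FinitePresentation R P₀]
    [AddCommGroup M] [Module R M]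
    (d : P₂ →ₗ[R] P₁) (ζ : P₁ →ₗ[R] P₀) (π : P₀ →ₗ[R] M)
    (hπ : Surjective π) (hexζ : LinearMap.range ζ = LinearMap.ker π)
    (hexd : LinearMap.range d = LinearMap.ker ζ)
    (Y : Type v) [AddCommGroup Y] [Module S Y] [Module R Y] [IsScalarTower S R Y]
    (hY : MemD R ζ Y) :
    MemB Rᵐᵒᵖ (dualMap S R E ζ) (Y →ₗ[S] E) :=  by
  classical
  intro g
  have hgS : ∀ (c : S) (φ : Y →ₗ[S] E), g (c • φ) = c • g φ := by
    intro c φ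
    have e1 : c • φ = MulOpposite.op (algebraMap S R c) • φ := by
      ext y
      show c • φ y = φ (algebraMap S R c • y)
      rw [algebraMap_smul, map_smul]
    rw [e1, map_smul]
    ext p
    show g φ (algebraMap S R c • p) = c • g φ p
    rw [algebraMap_smul, map_smul]
  obtain ⟨n, t, s, -, -, hts⟩ := Module.Finite.exists_comp_eq_id_of_projective R P₁
  -- `u` : precomposition with `ζ`, an `S`-linear surjection `Hom_R(P₀,Y) → Hom_R(P₁,Y)`
  set u : ((P₀ →ₗ[R] Y) →ₗ[S] (P₁ →ₗ[R] Y)) :=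
    { toFun := fun f => f ∘ₗ ζ
      map_add' := fun f f' => rfl
      map_smul' := fun c f => rfl } with hu
  have hu_surj : Surjective u := hY
  -- its dual `u^d`, which is injective
  set ud : (((P₁ →ₗ[R] Y) →ₗ[S] E) →ₗ[S] ((P₀ →ₗ[R] Y) →ₗ[S] E)) :=
    { toFun := fun χ => χ ∘ₗ u
      map_add' := fun χ χ' => rfl
      map_smul' := fun c χ => rfl } with hud
  have hud_inj : Injective ud := by
    intro χ χ' h
    ext f
    obtain ⟨f', rfl⟩ := hu_surj f
    exact congrArg (fun ρ => ρ f') h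
  -- the element of `Hom_R(P₁,Y)^{dd}` corresponding to `g`
  set Ξ : (((P₁ →ₗ[R] Y) →ₗ[S] E) →ₗ[S] E) :=
    { toFun := fun χ => ∑ i : Fin n, g (χ ∘ₗ tauMap s i) (t (Pi.single i 1))
      map_add' := fun χ χ' => by
        rw [← Finset.sum_add_distrib]
        refine Finset.sum_congr rfl fun i _ => ?_
        have : (χ + χ') ∘ₗ tauMap (S := S) s i
            = χ ∘ₗ tauMap s i + χ' ∘ₗ tauMap s i := rfl
        rw [this, map_add]; rfl
      map_smul' := fun c χ => by
        simp only [RingHom.id_apply, LinearMap.smul_apply, Finset.smul_sum]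
        refine Finset.sum_congr rfl fun i _ => ?_
        have : (c • χ) ∘ₗ tauMap (S := S) s i
            = c • (χ ∘ₗ tauMap s i) := rfl
        rw [this, hgS]; rfl } with hΞ
  -- the key computation : `Ξ (evalPair φ p) = g φ p`
  have key : ∀ (φ : Y →ₗ[S] E) (p : P₁), Ξ (evalPair φ p) = g φ p := by
    intro φ p
    have step1 : ∀ i : Fin n,
        (evalPair (R := R) φ p) ∘ₗ tauMap (S := S) s i = MulOpposite.op (s p i) • φ := by
      intro i; ext y; rfl
    have step2 : ∀ i : Fin n,
        g (MulOpposite.op (s p i) • φ) (t (Pi.single i 1))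
          = g φ (s p i • t (Pi.single i 1)) := by
      intro i
      rw [map_smul]
      rfl
    calc Ξ (evalPair φ p)
        = ∑ i : Fin n, g ((evalPair φ p) ∘ₗ tauMap s i) (t (Pi.single i 1)) := rfl
      _ = ∑ i : Fin n, g φ (s p i • t (Pi.single i 1)) := by
          refine Finset.sum_congr rfl fun i _ => ?_
          rw [step1 i, step2 i]
      _ = g φ (∑ i : Fin n, s p i • t (Pi.single i 1)) := by rw [map_sum]
      _ = g φ p := by
          congr 1
          have : ∑ i : Fin n, s p i • t (Pi.single i 1)
              = t (∑ i : Fin n, Pi.single i (s p i)) := by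
            rw [map_sum]
            refine Finset.sum_congr rfl fun i _ => ?_
            rw [← map_smul]
            congr 1
            ext j
            by_cases h : j = i
            · subst h; simp
            · simp [Pi.single_eq_of_ne h]
          rw [this, Finset.univ_sum_single]
          exact congrArg (fun ρ : P₁ →ₗ[R] P₁ => ρ p) hts
  -- extend `Ξ` along the injection `ud` using injectivity of `E`
  obtain ⟨Ξ', hΞ'⟩ := Module.Injective.out ud hud_inj Ξ
  -- assemble the lift
  refine ⟨{ toFun := fun φ =>
              { toFun := fun q => Ξ' (evalPair φ q)
                map_add' := fun q q' => by
                  have h1 : evalPair (R := R) (E := E) φ (q + q')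
                      = evalPair φ q + evalPair φ q' := by ext f; simp
                  show Ξ' (evalPair φ (q + q'))
                      = Ξ' (evalPair φ q) + Ξ' (evalPair φ q')
                  rw [h1, map_add]
                map_smul' := fun c q => by
                  have h1 : evalPair (R := R) (E := E) φ (c • q)
                      = c • evalPair φ q := by
                    ext f; simp [LinearMap.map_smul_of_tower]
                  show Ξ' (evalPair φ (c • q)) = c • Ξ' (evalPair φ q)
                  rw [h1, map_smul] }
            map_add' := fun φ φ' => by
              ext q
              have h1 : evalPair (R := R) (E := E) (φ + φ') q
                  = evalPair φ q + evalPair φ' q := by ext f; simp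
              simp only [LinearMap.coe_mk, AddHom.coe_mk, LinearMap.add_apply, h1, map_add]
            map_smul' := fun r φ => by
              ext q
              have h1 : evalPair (R := R) (E := E) (r • φ) q
                  = evalPair φ (r.unop • q) := by
                ext f
                exact congrArg φ (map_smul f r.unop q).symm
              show Ξ' (evalPair (r • φ) q) = Ξ' (evalPair φ (r.unop • q))
              rw [h1] }, ?_⟩
  ext φ p
  show Ξ' (evalPair φ (ζ p)) = g φ p
  have : evalPair (R := R) (E := E) φ (ζ p) = ud (evalPair φ p) := by
    ext f; rfl
  rw [this, hΞ' (evalPair φ p), key]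
end

section
/- Let S be a commutative ring, R an S-algebra, E an injective cogenerator of the category of S-modules, and write (-)^d = Hom_S(-,E) for the induced contravariant functors between left R-modules and right R-modules. Let P₂ → P₁ →ζ→ P₀ → M → 0 be an exact sequence of left R-modules with P₀, P₁, P₂ finitely presented projective. Then M is partial silting with respect to ζ (i.e. M ∈ 𝒟_ζ and 𝒟_ζ is closed under direct sums) if and only if the right R-module M^d is partial cosilting with respect to ζ^d : P₀^d → P₁^d (i.e. M^d ∈ 𝓑_{ζ^d} and 𝓑_{ζ^d} is closed under arbitrary direct products, where 0 → M^d → P₀^d →ζ^d→ P₁^d is an injective copresentation of M^d). -/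
universe u u' v

open Function

/-!
For a finitely generated projective `P` with dual `P^* = Hom_R(P, R)`, the group
`Hom_{Rᵒᵖ}(P^*, X)` is a model of `X ⊗_R P`, and `Hom_R(P, M)` is one of `P^* ⊗_R M`.
The tensor–hom adjunction and the fact that `E` is an injective cogenerator then show:
`X ∈ 𝓑_{ζ^d}` iff `φ ↦ φ ∘ ζ^*` is injective on `Hom_{Rᵒᵖ}(P₁^*, X)` (that is, `X ⊗ ζ` is
injective), a condition visibly closed under products; and for `X = M^d` this is dual to the
surjectivity of `Hom_R(ζ, M)`, i.e. to `M ∈ 𝒟_ζ`. Finally `𝒟_ζ` is always closed under direct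
sums, because a map from the finitely generated `P₁` into a direct sum lands in a finite partial
sum.
-/

open MulOpposite

section Cogenerator

variable {S : Type u} [CommRing S] {E : Type v} [AddCommGroup E] [Module S E]

/- `E` only cogenerates, and is only injective for, modules in its own universe `v`; the modules
`Hom_{Rᵒᵖ}(P^*, X)` below live in a larger universe but are `v`-small. -/
theorem exists_apply_ne_zero_of_small
    (hE : ∀ (N : Type v) [AddCommGroup N] [Module S N], MemCogen S E N)
    {A : Type*} [AddCommGroup A] [Module S A] [Small.{v} A] {a : A} (ha : a ≠ 0) :
    ∃ l : A →ₗ[S] E, l a ≠ 0 := by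
  let e := (Shrink.linearEquiv.{v} S A).symm
  obtain ⟨ι, f, hf⟩ := hE (Shrink.{v} A)
  have hfe : f (e a) ≠ 0 := (map_ne_zero_iff (f ∘ₗ e.toLinearMap) (hf.comp e.injective)).mpr ha
  obtain ⟨i, hi⟩ := Function.ne_iff.mp hfe
  exact ⟨LinearMap.proj i ∘ₗ f ∘ₗ e.toLinearMap, hi⟩

theorem Module.Injective.exists_comp_eq_of_small [Module.Injective S E]
    {A B : Type*} [AddCommGroup A] [Module S A] [Small.{v} A] [AddCommGroup B] [Module S B]
    [Small.{v} B] (f : A →ₗ[S] B) (hf : Function.Injective f) (g : A →ₗ[S] E) :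
    ∃ h : B →ₗ[S] E, h ∘ₗ f = g := by
  let eA := Shrink.linearEquiv.{v} S A
  let eB := Shrink.linearEquiv.{v} S B
  obtain ⟨h, hh⟩ := Module.Injective.out (eB.symm.toLinearMap ∘ₗ f ∘ₗ eA.toLinearMap)
    (eB.symm.injective.comp (hf.comp eA.injective)) (g ∘ₗ eA.toLinearMap)
  refine ⟨h ∘ₗ eB.symm.toLinearMap, LinearMap.ext fun a => ?_⟩
  simpa using hh (eA.symm a)

theorem surjective_iff_injective_lcomp
    (hE : ∀ (N : Type v) [AddCommGroup N] [Module S N], MemCogen S E N)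
    {A B : Type v} [AddCommGroup A] [Module S A] [AddCommGroup B] [Module S B] (φ : A →ₗ[S] B) :
    Surjective φ ↔ Injective (LinearMap.lcomp S E φ) := by
  refine ⟨LinearMap.lcomp_injective_of_surjective φ, fun hinj b => ?_⟩
  by_contra hb
  have hq : (LinearMap.range φ).mkQ b ≠ 0 := by
    simpa [Submodule.Quotient.mk_eq_zero] using hb
  obtain ⟨l, hl⟩ := exists_apply_ne_zero_of_small hE hq
  have hl0 : l ∘ₗ (LinearMap.range φ).mkQ = 0 := hinj <| by
    rw [map_zero, LinearMap.lcomp_apply', LinearMap.comp_assoc, LinearMap.range_mkQ_comp,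
      LinearMap.comp_zero]
  exact hl (LinearMap.congr_fun hl0 b)

theorem injective_iff_surjective_lcomp [Module.Injective S E]
    (hE : ∀ (N : Type v) [AddCommGroup N] [Module S N], MemCogen S E N)
    {A B : Type*} [AddCommGroup A] [Module S A] [Small.{v} A] [AddCommGroup B] [Module S B]
    [Small.{v} B] (φ : A →ₗ[S] B) :
    Injective φ ↔ Surjective (LinearMap.lcomp S E φ) := by
  refine ⟨fun hφ l => Module.Injective.exists_comp_eq_of_small φ hφ l,
    fun hφ => (injective_iff_map_eq_zero φ).mpr fun a ha => ?_⟩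
  by_contra ha0
  obtain ⟨l, hl⟩ := exists_apply_ne_zero_of_small hE ha0
  obtain ⟨g, rfl⟩ := hφ l
  exact hl (by simp [ha])

end Cogenerator

theorem Function.surjective_iff_of_comp_eq_of_bijective {α β γ δ : Sort*} {f : α → β}
    {g : γ → δ} {e₁ : α → γ} {e₂ : β → δ} (h₁ : Bijective e₁) (h₂ : Bijective e₂)
    (h : g ∘ e₁ = e₂ ∘ f) : Surjective f ↔ Surjective g := by
  refine ⟨fun hf => Surjective.of_comp (g := e₁) ?_, fun hg => Surjective.of_comp_left ?_ h₂.1⟩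
  · rw [h]
    exact h₂.2.comp hf
  · rw [← h]
    exact hg.comp h₁.2

theorem Function.injective_iff_of_comp_eq_of_bijective {α β γ δ : Sort*} {f : α → β}
    {g : γ → δ} {e₁ : α → γ} {e₂ : β → δ} (h₁ : Bijective e₁) (h₂ : Bijective e₂)
    (h : g ∘ e₁ = e₂ ∘ f) : Injective f ↔ Injective g := by
  rw [← h₂.1.of_comp_iff, ← h, Injective.of_comp_iff' _ h₁]

section DualBasis

variable {R : Type u'} [Ring R] {P : Type v} [AddCommGroup P] [Module R P]

theorem Module.exists_dual_basis [Module.Projective R P] [Module.Finite R P] :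
    ∃ (n : ℕ) (p : Fin n → P) (c : Fin n → P →ₗ[R] R), ∀ x, ∑ k, c k x • p k = x := by
  obtain ⟨n, p, hp⟩ := Module.Finite.exists_fin (R := R) (M := P)
  obtain ⟨s, hs⟩ := (Fintype.linearCombination R p).exists_rightInverse_of_surjective
    (by rw [Fintype.range_linearCombination, hp])
  refine ⟨n, p, fun k => LinearMap.proj k ∘ₗ s, fun x => ?_⟩
  simpa [Fintype.linearCombination_apply] using LinearMap.congr_fun hs x

theorem sum_op_smul_dual_basis {n : ℕ} {p : Fin n → P} {c : Fin n → P →ₗ[R] R}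
    (hpc : ∀ x, ∑ k, c k x • p k = x) (ψ : P →ₗ[R] R) : ∑ k, op (ψ (p k)) • c k = ψ := by
  ext x
  conv_rhs => rw [← hpc x]
  simp [map_sum]

instance small_linearMap_dual [Module.Projective R P] [Module.Finite R P]
    (X : Type v) [AddCommGroup X] [Module Rᵐᵒᵖ X] : Small.{v} ((P →ₗ[R] R) →ₗ[Rᵐᵒᵖ] X) := by
  obtain ⟨n, p, c, hpc⟩ := Module.exists_dual_basis (R := R) (P := P)
  refine small_of_injective (f := fun φ (k : Fin n) => φ (c k)) fun φ φ' h => ?_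
  ext ψ
  rw [← sum_op_smul_dual_basis hpc ψ, map_sum, map_sum]
  simp only [map_smul, fun k => congrFun h k]

end DualBasis

section Adjunction

variable {S : Type u} [CommRing S] {R : Type u'} [Ring R] [Algebra S R]
  {E : Type v} [AddCommGroup E] [Module S E] {P : Type v} [AddCommGroup P] [Module R P]

instance dualIsScalarTower {M : Type v} [AddCommGroup M] [Module S M] [Module R M]
    [IsScalarTower S R M] : IsScalarTower S Rᵐᵒᵖ (M →ₗ[S] E) :=
  ⟨fun s r f => LinearMap.ext fun m => by
    show f ((s • r).unop • m) = s • f (r.unop • m)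
    rw [unop_smul, smul_assoc, map_smul]⟩

section Tensor

variable [Module S P] [IsScalarTower S R P]
  {X : Type v} [AddCommGroup X] [Module S X] [Module Rᵐᵒᵖ X] [IsScalarTower S Rᵐᵒᵖ X]

/- `tmulHom S ξ q : ψ ↦ ξ • ψ q` stands for `ξ ⊗ q ∈ X ⊗_R P`. -/
variable (S) in
def tmulHom (ξ : X) : P →ₗ[S] (P →ₗ[R] R) →ₗ[Rᵐᵒᵖ] X where
  toFun q :=
    { toFun := fun ψ => op (ψ q) • ξ
      map_add' := by simp [add_smul]
      map_smul' := by simp [mul_smul] }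
  map_add' q q' := by ext ψ; simp [add_smul]
  map_smul' s q := by ext ψ; simp [LinearMap.map_smul_of_tower, op_smul, smul_assoc]

@[simp] theorem tmulHom_apply (ξ : X) (q : P) (ψ : P →ₗ[R] R) :
    tmulHom S ξ q ψ = op (ψ q) • ξ := rfl

def tensorDualToHom (Λ : ((P →ₗ[R] R) →ₗ[Rᵐᵒᵖ] X) →ₗ[S] E) : X →ₗ[Rᵐᵒᵖ] P →ₗ[S] E where
  toFun ξ := Λ ∘ₗ tmulHom S ξ
  map_add' ξ ξ' := by
    ext q
    show Λ _ = Λ _ + Λ _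
    rw [← map_add]
    congr 1
    ext ψ
    simp [smul_add]
  map_smul' r ξ := by
    ext q
    show Λ _ = Λ _
    congr 1
    ext ψ
    show op (ψ q) • r • ξ = op (ψ (r.unop • q)) • ξ
    rw [map_smul, smul_eq_mul, op_mul, op_unop, mul_smul]

theorem tensorDualToHom_apply (Λ : ((P →ₗ[R] R) →ₗ[Rᵐᵒᵖ] X) →ₗ[S] E) (ξ : X) (q : P) :
    tensorDualToHom Λ ξ q = Λ (tmulHom S ξ q) := rfl

def homToTensorDual {n : ℕ} (p : Fin n → P) (c : Fin n → P →ₗ[R] R)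
    (h : X →ₗ[Rᵐᵒᵖ] P →ₗ[S] E) : ((P →ₗ[R] R) →ₗ[Rᵐᵒᵖ] X) →ₗ[S] E :=
  ∑ k, LinearMap.applyₗ (p k) ∘ₗ h.restrictScalars S ∘ₗ LinearMap.applyₗ' S (c k)

theorem tensorDualToHom_bijective [Module.Projective R P] [Module.Finite R P] :
    Bijective (tensorDualToHom : (((P →ₗ[R] R) →ₗ[Rᵐᵒᵖ] X) →ₗ[S] E) → _) := by
  obtain ⟨n, p, c, hpc⟩ := Module.exists_dual_basis (R := R) (P := P)
  refine bijective_iff_has_inverse.mpr ⟨homToTensorDual p c, fun Λ => ?_, fun h => ?_⟩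
  · ext φ
    simp only [homToTensorDual, LinearMap.sum_apply, LinearMap.comp_apply,
      LinearMap.applyₗ'_apply_apply, LinearMap.restrictScalars_apply,
      LinearMap.applyₗ_apply_apply, tensorDualToHom_apply]
    rw [← map_sum]
    congr 1
    ext ψ
    conv_rhs => rw [← sum_op_smul_dual_basis hpc ψ]
    simp [map_sum]
  · ext ξ q
    simp only [tensorDualToHom_apply, homToTensorDual, LinearMap.sum_apply, LinearMap.comp_apply,
      LinearMap.applyₗ'_apply_apply, LinearMap.restrictScalars_apply,
      LinearMap.applyₗ_apply_apply, tmulHom_apply, map_smul]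
    show ∑ k, h ξ (c k q • p k) = h ξ q
    rw [← map_sum, hpc]

end Tensor

section HomDual

variable {M : Type v} [AddCommGroup M] [Module S M] [Module R M] [IsScalarTower S R M]

variable (S) in
def smulRightHom (ψ : P →ₗ[R] R) : M →ₗ[S] P →ₗ[R] M where
  toFun m := ψ.smulRight m
  map_add' m m' := by ext; exact smul_add _ _ _
  map_smul' s m := by ext; exact smul_comm _ _ _

def dualHomToHomDual (Λ : (P →ₗ[R] M) →ₗ[S] E) : (P →ₗ[R] R) →ₗ[Rᵐᵒᵖ] M →ₗ[S] E where
  toFun ψ := Λ ∘ₗ smulRightHom S ψ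
  map_add' ψ ψ' := by
    ext m
    show Λ _ = Λ _ + Λ _
    rw [← map_add]
    congr 1
    ext
    exact add_smul _ _ _
  map_smul' r ψ := by
    ext m
    show Λ _ = Λ _
    congr 1
    ext x
    show (ψ x * r.unop) • m = ψ x • r.unop • m
    rw [mul_smul]

theorem dualHomToHomDual_apply (Λ : (P →ₗ[R] M) →ₗ[S] E) (ψ : P →ₗ[R] R) (m : M) :
    dualHomToHomDual Λ ψ m = Λ (ψ.smulRight m) := rfl

def homDualToDualHom {n : ℕ} (p : Fin n → P) (c : Fin n → P →ₗ[R] R)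
    (F : (P →ₗ[R] R) →ₗ[Rᵐᵒᵖ] M →ₗ[S] E) : (P →ₗ[R] M) →ₗ[S] E :=
  ∑ k, F (c k) ∘ₗ LinearMap.applyₗ' S (p k)

theorem dualHomToHomDual_bijective [Module.Projective R P] [Module.Finite R P] :
    Bijective (dualHomToHomDual : ((P →ₗ[R] M) →ₗ[S] E) → _) := by
  obtain ⟨n, p, c, hpc⟩ := Module.exists_dual_basis (R := R) (P := P)
  refine bijective_iff_has_inverse.mpr ⟨homDualToDualHom p c, fun Λ => ?_, fun F => ?_⟩
  · ext g
    simp only [homDualToDualHom, LinearMap.sum_apply, LinearMap.comp_apply,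
      LinearMap.applyₗ'_apply_apply, dualHomToHomDual_apply]
    rw [← map_sum]
    congr 1
    ext x
    rw [LinearMap.sum_apply]
    simp_rw [LinearMap.smulRight_apply, ← map_smul]
    rw [← map_sum, hpc]
  · ext ψ m
    simp only [dualHomToHomDual_apply, homDualToDualHom, LinearMap.sum_apply,
      LinearMap.comp_apply, LinearMap.applyₗ'_apply_apply, LinearMap.smulRight_apply]
    simp_rw [show ∀ k, F (c k) (ψ (p k) • m) = F (op (ψ (p k)) • c k) m from
      fun k => by rw [map_smul F]; rfl]
    rw [← LinearMap.sum_apply, ← map_sum, sum_op_smul_dual_basis hpc]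

end HomDual

end Adjunction

section Characterisation

variable {S : Type u} [CommRing S] {R : Type u'} [Ring R] [Algebra S R]
  {E : Type v} [AddCommGroup E] [Module S E] [Module.Injective S E]
  {P₁ P₀ : Type v}
  [AddCommGroup P₁] [Module S P₁] [Module R P₁] [IsScalarTower S R P₁]
  [Module.Projective R P₁] [Module.Finite R P₁]
  [AddCommGroup P₀] [Module S P₀] [Module R P₀] [IsScalarTower S R P₀]
  [Module.Projective R P₀] [Module.Finite R P₀]
  (ζ : P₁ →ₗ[R] P₀)

theorem memB_dualMap_iff_injective
    (hE : ∀ (N : Type v) [AddCommGroup N] [Module S N], MemCogen S E N)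
    (X : Type v) [AddCommGroup X] [Module Rᵐᵒᵖ X] :
    MemB Rᵐᵒᵖ (dualMap S R E ζ) X ↔
      Injective fun φ : (P₁ →ₗ[R] R) →ₗ[Rᵐᵒᵖ] X => φ ∘ₗ LinearMap.lcomp Rᵐᵒᵖ R ζ := by
  let _ : Module S X := Module.compHom X (algebraMap S Rᵐᵒᵖ)
  have : IsScalarTower S Rᵐᵒᵖ X := ⟨fun s r x => by rw [Algebra.smul_def, mul_smul]; rfl⟩
  exact (Function.surjective_iff_of_comp_eq_of_bijective tensorDualToHom_bijective
    tensorDualToHom_bijective rfl).symm.trans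
    (injective_iff_surjective_lcomp hE (LinearMap.lcomp S X (LinearMap.lcomp Rᵐᵒᵖ R ζ))).symm

theorem memD_iff_memB_dualMap
    (hE : ∀ (N : Type v) [AddCommGroup N] [Module S N], MemCogen S E N)
    (M : Type v) [AddCommGroup M] [Module S M] [Module R M] [IsScalarTower S R M] :
    MemD R ζ M ↔ MemB Rᵐᵒᵖ (dualMap S R E ζ) (M →ₗ[S] E) := by
  rw [memB_dualMap_iff_injective ζ hE]
  exact (surjective_iff_injective_lcomp hE (LinearMap.lcomp S M ζ)).trans
    (Function.injective_iff_of_comp_eq_of_bijective dualHomToHomDual_bijective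
      dualHomToHomDual_bijective rfl)

theorem memB_dualMap_pi (hE : ∀ (N : Type v) [AddCommGroup N] [Module S N], MemCogen S E N)
    {ι : Type v} (X : ι → Type v) [∀ i, AddCommGroup (X i)] [∀ i, Module Rᵐᵒᵖ (X i)]
    (hX : ∀ i, MemB Rᵐᵒᵖ (dualMap S R E ζ) (X i)) :
    MemB Rᵐᵒᵖ (dualMap S R E ζ) (∀ i, X i) := by
  simp only [memB_dualMap_iff_injective ζ hE] at hX ⊢
  intro φ φ' h
  ext ψ i
  refine LinearMap.congr_fun (@hX i (LinearMap.proj i ∘ₗ φ) (LinearMap.proj i ∘ₗ φ') ?_) ψ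
  change (LinearMap.proj i ∘ₗ φ) ∘ₗ _ = (LinearMap.proj i ∘ₗ φ') ∘ₗ _
  rw [LinearMap.comp_assoc, LinearMap.comp_assoc]
  exact congrArg _ h

end Characterisation

theorem DirectSum.exists_finset_comp_eq {R : Type*} [Ring R] {ι : Type*} [DecidableEq ι]
    {N : ι → Type*} [∀ i, AddCommGroup (N i)] [∀ i, Module R (N i)] {P : Type*}
    [AddCommGroup P] [Module R P] [Module.Finite R P] (g : P →ₗ[R] DirectSum ι N) :
    ∃ F : Finset ι, (∑ i ∈ F, lof R ι N i ∘ₗ component R ι N i) ∘ₗ g = g := by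
  classical
  obtain ⟨s, hs⟩ := Module.Finite.fg_top (R := R) (M := P)
  refine ⟨s.biUnion fun x => (g x).support, LinearMap.ext_on hs fun x hx => ?_⟩
  rw [LinearMap.comp_apply, LinearMap.sum_apply]
  conv_rhs => rw [← sum_support_of (g x)]
  refine (Finset.sum_subset (Finset.subset_biUnion_of_mem _ hx) fun i _ hi => ?_).symm
  rw [LinearMap.comp_apply, ← apply_eq_component, DFinsupp.notMem_support_iff.mp hi, map_zero]

theorem memD_directSum {R : Type u'} [Ring R] {P₁ P₀ : Type v} [AddCommGroup P₁] [Module R P₁]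
    [Module.Finite R P₁] [AddCommGroup P₀] [Module R P₀] (ζ : P₁ →ₗ[R] P₀) {ι : Type v}
    (N : ι → Type v) [∀ i, AddCommGroup (N i)] [∀ i, Module R (N i)]
    (hN : ∀ i, MemD R ζ (N i)) : MemD R ζ (DirectSum ι N) := by
  classical
  intro g
  obtain ⟨F, hF⟩ := DirectSum.exists_finset_comp_eq g
  choose h hh using fun i => hN i (DirectSum.component R ι N i ∘ₗ g)
  refine ⟨∑ i ∈ F, DirectSum.lof R ι N i ∘ₗ h i, LinearMap.ext fun x => ?_⟩
  conv_rhs => rw [← hF]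
  simp only [LinearMap.comp_apply, LinearMap.sum_apply]
  exact Finset.sum_congr rfl fun i _ => congrArg _ (LinearMap.congr_fun (hh i) x)

theorem stmt_11_general {S : Type u} [CommRing S] {R : Type u'} [Ring R] [Algebra S R]
    (E : Type v) [AddCommGroup E] [Module S E] [Module.Injective S E]
    (hcog : ∀ (N : Type v) [AddCommGroup N] [Module S N],
      ∃ (ι : Type v) (f : N →ₗ[S] (ι → E)), Injective f)
    (P₁ P₀ M : Type v)
    [AddCommGroup P₁] [Module S P₁] [Module R P₁] [IsScalarTower S R P₁]
    [Module.Projective R P₁] [Module.FinitePresentation R P₁]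
    [AddCommGroup P₀] [Module S P₀] [Module R P₀] [IsScalarTower S R P₀]
    [Module.Projective R P₀] [Module.FinitePresentation R P₀]
    [AddCommGroup M] [Module S M] [Module R M] [IsScalarTower S R M]
    (ζ : P₁ →ₗ[R] P₀) :
    (MemD R ζ M ∧
      ∀ (ι : Type v) (N : ι → Type v) [∀ i, AddCommGroup (N i)] [∀ i, Module R (N i)],
        (∀ i, MemD R ζ (N i)) → MemD R ζ (DirectSum ι N)) ↔
    (MemB Rᵐᵒᵖ (dualMap S R E ζ) (M →ₗ[S] E) ∧
      ∀ (ι : Type v) (X : ι → Type v) [∀ i, AddCommGroup (X i)] [∀ i, Module Rᵐᵒᵖ (X i)],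
        (∀ i, MemB Rᵐᵒᵖ (dualMap S R E ζ) (X i)) → MemB Rᵐᵒᵖ (dualMap S R E ζ) (∀ i, X i)) := by
  have hM := memD_iff_memB_dualMap ζ hcog M
  exact ⟨fun h => ⟨hM.mp h.1, fun _ X _ _ => memB_dualMap_pi ζ hcog X⟩,
    fun h => ⟨hM.mpr h.1, fun _ N _ _ => memD_directSum ζ N⟩⟩

/-- For a projective presentation `P₂ → P₁ →ζ→ P₀ → M → 0` of a left `R`-module `M` by finitely
presented projectives: `M` is partial silting with respect to `ζ` (i.e. `M ∈ 𝒟_ζ` and `𝒟_ζ` is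
closed under direct sums) iff `M^d` is partial cosilting with respect to `ζ^d` (i.e.
`M^d ∈ 𝓑_{ζ^d}` and `𝓑_{ζ^d}` is closed under arbitrary direct products). -/
theorem stmt_11 {S : Type u} [CommRing S] {R : Type u'} [Ring R] [Algebra S R]
    (E : Type v) [AddCommGroup E] [Module S E] [Module.Injective S E]
    (hcog : ∀ (N : Type v) [AddCommGroup N] [Module S N],
      ∃ (ι : Type v) (f : N →ₗ[S] (ι → E)), Injective f)
    (P₂ P₁ P₀ M : Type v)
    [AddCommGroup P₂] [Module R P₂] [Module.Projective R P₂] [Module.FinitePresentation R P₂]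
    [AddCommGroup P₁] [Module S P₁] [Module R P₁] [IsScalarTower S R P₁]
    [Module.Projective R P₁] [Module.FinitePresentation R P₁]
    [AddCommGroup P₀] [Module S P₀] [Module R P₀] [IsScalarTower S R P₀]
    [Module.Projective R P₀] [Module.FinitePresentation R P₀]
    [AddCommGroup M] [Module S M] [Module R M] [IsScalarTower S R M]
    (d : P₂ →ₗ[R] P₁) (ζ : P₁ →ₗ[R] P₀) (π : P₀ →ₗ[R] M)
    (hπ : Surjective π) (hexζ : LinearMap.range ζ = LinearMap.ker π)
    (hexd : LinearMap.range d = LinearMap.ker ζ) :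
    (MemD R ζ M ∧
      ∀ (ι : Type v) (N : ι → Type v) [∀ i, AddCommGroup (N i)] [∀ i, Module R (N i)],
        (∀ i, MemD R ζ (N i)) → MemD R ζ (DirectSum ι N)) ↔
    (MemB Rᵐᵒᵖ (dualMap S R E ζ) (M →ₗ[S] E) ∧
      ∀ (ι : Type v) (X : ι → Type v) [∀ i, AddCommGroup (X i)] [∀ i, Module Rᵐᵒᵖ (X i)],
        (∀ i, MemB Rᵐᵒᵖ (dualMap S R E ζ) (X i)) → MemB Rᵐᵒᵖ (dualMap S R E ζ) (∀ i, X i)) :=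
  stmt_11_general E hcog P₁ P₀ M ζ
end

section
/- Let S be a commutative ring, R an S-algebra, E an injective cogenerator of the category of S-modules, and write (-)^d = Hom_S(-,E) for the induced contravariant functors between left R-modules and right R-modules. Let P₂ → P₁ →ζ→ P₀ → M → 0 be an exact sequence of left R-modules with P₀, P₁, P₂ finitely presented projective. If M is silting with respect to ζ, i.e. Gen(M) = 𝒟_ζ, then the right R-module M^d is cosilting with respect to ζ^d : P₀^d → P₁^d, i.e. Cogen(M^d) = 𝓑_{ζ^d}. -/
universe u u' v

open Function

section Aux

open MulOpposite

variable {S : Type u} [CommRing S] {R : Type u'} [Ring R] [Algebra S R]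
variable {E : Type v} [AddCommGroup E] [Module S E]

/-- The dual of a left module is a scalar tower. -/
instance towerDual (M : Type v) [AddCommGroup M] [Module S M] [Module R M]
    [IsScalarTower S R M] : IsScalarTower S Rᵐᵒᵖ (M →ₗ[S] E) := by
  refine ⟨fun s r f => ?_⟩
  ext m
  show f ((s • r).unop • m) = s • f (r.unop • m)
  rw [MulOpposite.unop_smul, smul_assoc, map_smul]

theorem smul_opAlg (s : S) {X : Type v} [AddCommGroup X] [Module S X] [Module Rᵐᵒᵖ X]
    [IsScalarTower S Rᵐᵒᵖ X] (x : X) : op (algebraMap S R s) • x = s • x := by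
  rw [← MulOpposite.algebraMap_apply, algebraMap_smul]

theorem map_smulS {X Y : Type v} [AddCommGroup X] [Module S X] [Module Rᵐᵒᵖ X]
    [IsScalarTower S Rᵐᵒᵖ X] [AddCommGroup Y] [Module S Y] [Module Rᵐᵒᵖ Y]
    [IsScalarTower S Rᵐᵒᵖ Y] (f : X →ₗ[Rᵐᵒᵖ] Y) (s : S) (x : X) :
    f (s • x) = s • f x := by
  rw [← smul_opAlg (R := R) s x, map_smul, smul_opAlg]

/-- An `Rᵐᵒᵖ`-linear map between compatible modules, viewed as an `S`-linear map. -/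
def restrictS {X Y : Type v} [AddCommGroup X] [Module S X] [Module Rᵐᵒᵖ X]
    [IsScalarTower S Rᵐᵒᵖ X] [AddCommGroup Y] [Module S Y] [Module Rᵐᵒᵖ Y]
    [IsScalarTower S Rᵐᵒᵖ Y] (f : X →ₗ[Rᵐᵒᵖ] Y) : X →ₗ[S] Y where
  toFun := f
  map_add' := f.map_add
  map_smul' s x := map_smulS f s x

section Conversions

variable {X : Type v} [AddCommGroup X] [Module S X] [Module Rᵐᵒᵖ X] [IsScalarTower S Rᵐᵒᵖ X]
variable {P : Type v} [AddCommGroup P] [Module S P] [Module R P] [IsScalarTower S R P]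

/-- Adjunction, one direction. -/
def toHomP (h : X →ₗ[Rᵐᵒᵖ] (P →ₗ[S] E)) : P →ₗ[R] (X →ₗ[S] E) where
  toFun p :=
    { toFun := fun x => h x p
      map_add' := fun x y => by show h (x + y) p = h x p + h y p; rw [map_add]; rfl
      map_smul' := fun s x => by
        show h (s • x) p = (RingHom.id S) s • h x p
        rw [map_smulS h]; rfl }
  map_add' p q := by ext x; exact map_add (h x) p q
  map_smul' r p := by
    ext x
    show h x (r • p) = h (op r • x) p
    rw [map_smul h (op r) x]
    rfl

/-- Adjunction, other direction. -/
def toHomX (h : P →ₗ[R] (X →ₗ[S] E)) : X →ₗ[Rᵐᵒᵖ] (P →ₗ[S] E) where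
  toFun x :=
    { toFun := fun p => h p x
      map_add' := fun p q => by show h (p + q) x = h p x + h q x; rw [map_add]; rfl
      map_smul' := fun s p => by
        show h (s • p) x = s • h p x
        rw [← algebraMap_smul R s p, map_smul h (algebraMap S R s) p]
        show h p (op (algebraMap S R s) • x) = s • h p x
        rw [smul_opAlg, map_smul] }
  map_add' x y := by ext p; exact map_add (h p) x y
  map_smul' r x := by
    ext p
    show h p (r • x) = h (r.unop • p) x
    rw [map_smul h r.unop p]
    rfl

@[simp] theorem toHomP_apply (h : X →ₗ[Rᵐᵒᵖ] (P →ₗ[S] E)) (p : P) (x : X) :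
    toHomP h p x = h x p := rfl

@[simp] theorem toHomX_apply (h : P →ₗ[R] (X →ₗ[S] E)) (x : X) (p : P) :
    toHomX h x p = h p x := rfl

end Conversions

end Aux

section L12

open MulOpposite

variable {S : Type u} [CommRing S] {R : Type u'} [Ring R] [Algebra S R]
variable {E : Type v} [AddCommGroup E] [Module S E]
variable {X : Type v} [AddCommGroup X] [Module S X] [Module Rᵐᵒᵖ X] [IsScalarTower S Rᵐᵒᵖ X]
variable {P₁ P₀ M : Type v}
  [AddCommGroup P₁] [Module S P₁] [Module R P₁] [IsScalarTower S R P₁]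
  [AddCommGroup P₀] [Module S P₀] [Module R P₀] [IsScalarTower S R P₀]
  [AddCommGroup M] [Module S M] [Module R M] [IsScalarTower S R M]

theorem memB_iff_memD (ζ : P₁ →ₗ[R] P₀) :
    MemB Rᵐᵒᵖ (dualMap S R E ζ) X ↔ MemD R ζ (X →ₗ[S] E) := by
  constructor
  · intro hB h'
    obtain ⟨g, hg⟩ := hB (toHomX h')
    refine ⟨toHomP g, ?_⟩
    ext p x
    exact LinearMap.congr_fun (LinearMap.congr_fun hg x) p
  · intro hD hh
    obtain ⟨g', hg'⟩ := hD (toHomP hh)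
    refine ⟨toHomX g', ?_⟩
    ext x p
    exact LinearMap.congr_fun (LinearMap.congr_fun hg' p) x

theorem memCogen_of_memGen
    (hcog : ∀ (N : Type v) [AddCommGroup N] [Module S N],
      ∃ (κ : Type v) (f : N →ₗ[S] (κ → E)), Injective f)
    (hgen : MemGen R M (X →ₗ[S] E)) : MemCogen Rᵐᵒᵖ (M →ₗ[S] E) X := by
  classical
  obtain ⟨κ', p, hp⟩ := hgen
  refine ⟨(X →ₗ[Rᵐᵒᵖ] (M →ₗ[S] E)),
    { toFun := fun x g => g x
      map_add' := fun a b => funext fun g => map_add g a b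
      map_smul' := fun r a => funext fun g => map_smul g r a }, ?_⟩
  rw [injective_iff_map_eq_zero]
  intro x hx
  by_contra hx0
  obtain ⟨κ, e, he⟩ := hcog X
  have hex : e x ≠ 0 := fun h => hx0 (he (by rw [h, map_zero]))
  obtain ⟨j, hj⟩ : ∃ j, e x j ≠ 0 := by
    by_contra hall; push_neg at hall; exact hex (funext hall)
  obtain ⟨c, hc⟩ := hp ((LinearMap.proj j).comp e)
  have key : ∃ (i : κ') (m : M), p (Finsupp.single i m) x ≠ 0 := by
    by_contra hall; push_neg at hall
    have h0 : p c x = 0 := by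
      conv_lhs => rw [← Finsupp.sum_single c, map_finsuppSum, Finsupp.sum,
        LinearMap.coe_sum, Finset.sum_apply]
      exact Finset.sum_eq_zero fun i _ => hall i (c i)
    rw [hc] at h0
    exact hj h0
  obtain ⟨i, m, him⟩ := key
  refine him ?_
  let g0 : X →ₗ[Rᵐᵒᵖ] (M →ₗ[S] E) :=
    { toFun := fun x' =>
        { toFun := fun m' => p (Finsupp.single i m') x'
          map_add' := fun a b => by
            show p (Finsupp.single i (a + b)) x' =
              p (Finsupp.single i a) x' + p (Finsupp.single i b) x'
            rw [Finsupp.single_add, map_add]; rfl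
          map_smul' := fun s a => by
            show p (Finsupp.single i (s • a)) x' = (RingHom.id S) s • p (Finsupp.single i a) x'
            rw [← algebraMap_smul R s a, ← Finsupp.smul_single,
              map_smul p (algebraMap S R s) (Finsupp.single i a)]
            show p (Finsupp.single i a) (op (algebraMap S R s) • x') = _
            rw [smul_opAlg, map_smul]
            rfl }
      map_add' := fun a b => by ext m'; exact map_add (p (Finsupp.single i m')) a b
      map_smul' := fun r x' => by
        ext m'
        show p (Finsupp.single i m') (r • x') = p (Finsupp.single i (r.unop • m')) x'
        rw [← Finsupp.smul_single, map_smul p r.unop (Finsupp.single i m')]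
        rfl }
  exact LinearMap.congr_fun (congrFun hx g0) m

end L12

section L3
set_option linter.unusedSectionVars false

open MulOpposite

variable {S : Type u} [CommRing S] {R : Type u'} [Ring R] [Algebra S R]
variable {E : Type v} [AddCommGroup E] [Module S E]
variable {ι : Type v}
variable {P P₁ P₀ M : Type v}
  [AddCommGroup P] [Module S P] [Module R P] [IsScalarTower S R P]
  [AddCommGroup P₁] [Module S P₁] [Module R P₁] [IsScalarTower S R P₁]
  [AddCommGroup P₀] [Module S P₀] [Module R P₀] [IsScalarTower S R P₀]
  [AddCommGroup M] [Module S M] [Module R M] [IsScalarTower S R M]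

/-- Evaluation at `p`, as an `S`-linear map on `R`-linear maps. -/
def evalAtS (p : P) : (P →ₗ[R] M) →ₗ[S] M where
  toFun u := u p
  map_add' _ _ := rfl
  map_smul' _ _ := rfl

/-- The functional `c ↦ ∑ᵢ φᵢ (cᵢ p)` on `ι →₀ (P →ₗ[R] M)`. -/
noncomputable def xiAux (φ : ι → (M →ₗ[S] E)) (p : P) : (ι →₀ (P →ₗ[R] M)) →ₗ[S] E :=
  Finsupp.lsum S fun i => (φ i).comp (evalAtS p)

@[simp] theorem xiAux_single (φ : ι → (M →ₗ[S] E)) (p : P) (i : ι) (u : P →ₗ[R] M) :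
    xiAux φ p (Finsupp.single i u) = φ i (u p) := by
  simp [xiAux, evalAtS]

theorem xiAux_add_p (φ : ι → (M →ₗ[S] E)) (p q : P) :
    xiAux (R := R) φ (p + q) = xiAux (R := R) φ p + xiAux (R := R) φ q := by
  ext i u
  simp [map_add]

theorem xiAux_add_phi (φ φ' : ι → (M →ₗ[S] E)) (p : P) :
    xiAux (R := R) (φ + φ') p = xiAux (R := R) φ p + xiAux (R := R) φ' p := by
  ext i u
  simp

theorem xiAux_smul_p (φ : ι → (M →ₗ[S] E)) (s : S) (p : P) :
    xiAux (R := R) φ (s • p) = s • xiAux (R := R) φ p := by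
  ext i u
  simp only [LinearMap.coe_comp, Function.comp_apply, Finsupp.lsingle_apply,
    LinearMap.smul_apply, xiAux_single]
  rw [← algebraMap_smul R s p, map_smul u (algebraMap S R s) p, algebraMap_smul, map_smul]

theorem xiAux_op_smul (φ : ι → (M →ₗ[S] E)) (r : R) (p : P) :
    xiAux (R := R) (op r • φ) p = xiAux (R := R) φ (r • p) := by
  ext i u
  simp only [LinearMap.coe_comp, Function.comp_apply, Finsupp.lsingle_apply, xiAux_single]
  rw [map_smul u r p]
  rfl

/-- Precomposition with `ζ`, as an `S`-linear map. -/
def compAux (ζ : P₁ →ₗ[R] P₀) : (P₀ →ₗ[R] M) →ₗ[S] (P₁ →ₗ[R] M) where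
  toFun v := v.comp ζ
  map_add' v w := LinearMap.add_comp _ _ _
  map_smul' s v := LinearMap.smul_comp _ _ _

theorem xiAux_comp (φ : ι → (M →ₗ[S] E)) (ζ : P₁ →ₗ[R] P₀) (p : P₁) :
    xiAux φ (ζ p) =
      (xiAux φ p).comp (Finsupp.mapRange.linearMap (compAux (M := M) ζ)) := by
  ext i u
  simp only [LinearMap.coe_comp, Function.comp_apply, Finsupp.lsingle_apply,
    Finsupp.mapRange.linearMap_apply, Finsupp.mapRange_single, xiAux_single]
  rfl

/-- The core lemma: a power of the dual of `M` is in the class `𝓑_{ζ^d}`. -/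
theorem memB_pi [Module.Projective R P₁] [Module.Finite R P₁] [Module.Injective S E]
    (ζ : P₁ →ₗ[R] P₀) (hM : MemD R ζ M) :
    MemB Rᵐᵒᵖ (dualMap S R E ζ) (ι → (M →ₗ[S] E)) := by
  classical
  intro hh
  -- dual basis for P₁
  obtain ⟨n, pr, hpr⟩ := Module.Finite.exists_fin' R P₁
  obtain ⟨sec, hsec⟩ := Module.projective_lifting_property pr LinearMap.id hpr
  set fk : Fin n → (P₁ →ₗ[R] R) := fun k => (LinearMap.proj k).comp sec with hfk
  set qk : Fin n → P₁ := fun k => pr (fun j => if k = j then 1 else 0) with hqk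
  have hbasis : ∀ p : P₁, (∑ k, fk k p • qk k) = p := by
    intro p
    have h1 : ∀ k, fk k p • qk k = pr ((sec p k) • fun j => if k = j then (1 : R) else 0) := by
      intro k; rw [map_smul]; rfl
    rw [Finset.sum_congr rfl fun k _ => h1 k, ← map_sum, ← pi_eq_sum_univ (sec p)]
    exact LinearMap.congr_fun hsec p
  -- the surjection on finsupps and its dual
  have hcomp : Surjective (compAux (S := S) (M := M) ζ) := hM
  set ctil : (ι →₀ (P₀ →ₗ[R] M)) →ₗ[S] (ι →₀ (P₁ →ₗ[R] M)) :=
    Finsupp.mapRange.linearMap (compAux (M := M) ζ) with hctil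
  have hctils : Surjective ctil :=
    Finsupp.mapRange_surjective _ (map_zero _) hcomp
  set cdual : ((ι →₀ (P₁ →ₗ[R] M)) →ₗ[S] E) →ₗ[S] ((ι →₀ (P₀ →ₗ[R] M)) →ₗ[S] E) :=
    { toFun := fun ξ => ξ.comp ctil
      map_add' := fun _ _ => LinearMap.add_comp _ _ _
      map_smul' := fun _ _ => LinearMap.smul_comp _ _ _ } with hcdual
  have hcdinj : Injective cdual := by
    intro ξ ξ' hξ
    refine LinearMap.ext fun w => ?_
    obtain ⟨w₀, rfl⟩ := hctils w
    exact LinearMap.congr_fun hξ w₀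
  -- the map `u_{k,m}`
  set uAux : (P₁ →ₗ[R] R) → M →ₗ[S] (P₁ →ₗ[R] M) := fun f =>
    { toFun := fun m =>
        { toFun := fun p => f p • m
          map_add' := fun p q => by
            show f (p + q) • m = f p • m + f q • m
            rw [map_add, add_smul]
          map_smul' := fun r p => by
            show f (r • p) • m = r • (f p • m)
            rw [map_smul f r p]
            exact mul_smul r (f p) m }
      map_add' := fun m m' => by
        ext p
        show f p • (m + m') = f p • m + f p • m'
        exact smul_add (f p) m m'
      map_smul' := fun s m => by
        ext p
        show f p • (s • m) = s • (f p • m)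
        exact smul_comm (f p) s m }
    with huAux
  -- the family of elements of the power module associated with a functional
  set wmap : (((ι →₀ (P₁ →ₗ[R] M)) →ₗ[S] E)) → Fin n → ι → (M →ₗ[S] E) := fun ξ k i =>
    ξ.comp ((Finsupp.lsingle i).comp (uAux (fk k))) with hwmap
  have hwkey : ∀ (φ : ι → (M →ₗ[S] E)) (p : P₁) (k : Fin n),
      wmap (xiAux φ p) k = op (fk k p) • φ := by
    intro φ p k
    funext i
    ext m
    show xiAux φ p (Finsupp.single i (uAux (fk k) m)) = φ i (fk k p • m)
    rw [xiAux_single]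
    rfl
  have hH : ∀ (φ : ι → (M →ₗ[S] E)) (p : P₁),
      (∑ k, hh (wmap (xiAux φ p) k) (qk k)) = hh φ p := by
    intro φ p
    have h2 : ∀ k, hh (wmap (xiAux φ p) k) (qk k) = hh φ (fk k p • qk k) := by
      intro k
      rw [hwkey φ p k, map_smul hh (op (fk k p)) φ]
      rfl
    rw [Finset.sum_congr rfl fun k _ => h2 k,
      ← map_sum (hh φ) (fun k => fk k p • qk k) Finset.univ, hbasis p]
  set H : ((ι →₀ (P₁ →ₗ[R] M)) →ₗ[S] E) →ₗ[S] E :=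
    { toFun := fun ξ => ∑ k, hh (wmap ξ k) (qk k)
      map_add' := fun ξ ξ' => by
        show (∑ k, hh (wmap (ξ + ξ') k) (qk k)) =
          (∑ k, hh (wmap ξ k) (qk k)) + ∑ k, hh (wmap ξ' k) (qk k)
        have h1 : ∀ k, wmap (ξ + ξ') k = wmap ξ k + wmap ξ' k := fun k =>
          funext fun i => LinearMap.add_comp _ _ _
        rw [← Finset.sum_add_distrib]
        exact Finset.sum_congr rfl fun k _ => by rw [h1 k, map_add]; rfl
      map_smul' := fun s ξ => by
        show (∑ k, hh (wmap (s • ξ) k) (qk k)) = s • ∑ k, hh (wmap ξ k) (qk k)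
        have h1 : ∀ k, wmap (s • ξ) k = s • wmap ξ k := fun k =>
          funext fun i => LinearMap.smul_comp _ _ _
        rw [Finset.smul_sum]
        exact Finset.sum_congr rfl fun k _ => by
          rw [h1 k, map_smulS hh]
          rfl } with hHdef
  obtain ⟨G, hG⟩ := Module.Injective.out cdual hcdinj H
  set g : (ι → (M →ₗ[S] E)) →ₗ[Rᵐᵒᵖ] (P₀ →ₗ[S] E) :=
    { toFun := fun φ =>
        { toFun := fun q => G (xiAux φ q)
          map_add' := fun q q' => by
            show G (xiAux φ (q + q')) = G (xiAux φ q) + G (xiAux φ q')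
            rw [xiAux_add_p, map_add]
          map_smul' := fun s q => by
            show G (xiAux φ (s • q)) = s • G (xiAux φ q)
            rw [xiAux_smul_p, map_smul] }
      map_add' := fun φ φ' => by
        ext q
        show G (xiAux (φ + φ') q) = G (xiAux φ q) + G (xiAux φ' q)
        rw [xiAux_add_phi, map_add]
      map_smul' := fun r φ => by
        ext q
        show G (xiAux (r • φ) q) = G (xiAux φ (r.unop • q))
        rw [← MulOpposite.op_unop r, xiAux_op_smul]
        rfl } with hgdef
  refine ⟨g, ?_⟩
  ext φ p
  show G (xiAux φ (ζ p)) = hh φ p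
  rw [xiAux_comp φ ζ p]
  exact (hG (xiAux φ p)).trans (hH φ p)

end L3

section L4
set_option linter.unusedSectionVars false

open MulOpposite

variable {S : Type u} [CommRing S] {R : Type u'} [Ring R] [Algebra S R]
variable {E : Type v} [AddCommGroup E] [Module S E]
variable {X W : Type v} [AddCommGroup X] [Module S X] [Module Rᵐᵒᵖ X] [IsScalarTower S Rᵐᵒᵖ X]
  [AddCommGroup W] [Module S W] [Module Rᵐᵒᵖ W] [IsScalarTower S Rᵐᵒᵖ W]
variable {P₁ P₀ : Type v}
  [AddCommGroup P₁] [Module S P₁] [Module R P₁] [IsScalarTower S R P₁]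
  [AddCommGroup P₀] [Module S P₀] [Module R P₀] [IsScalarTower S R P₀]

theorem memB_of_injective [Module.Projective R P₁] [Module.Injective S E]
    (ζ : P₁ →ₗ[R] P₀) (f : X →ₗ[Rᵐᵒᵖ] W) (hf : Injective f)
    (hW : MemB Rᵐᵒᵖ (dualMap S R E ζ) W) :
    MemB Rᵐᵒᵖ (dualMap S R E ζ) X := by
  intro h
  set fdual : (W →ₗ[S] E) →ₗ[R] (X →ₗ[S] E) :=
    { toFun := fun ψ => ψ.comp (restrictS f)
      map_add' := fun _ _ => LinearMap.add_comp _ _ _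
      map_smul' := fun r ψ => by
        ext x
        show ψ (op r • f x) = ψ (f (op r • x))
        rw [map_smul f (op r) x] } with hfd
  have hfds : Surjective fdual := by
    intro χ
    obtain ⟨ψ, hψ⟩ := Module.Injective.out (restrictS f) hf χ
    exact ⟨ψ, LinearMap.ext fun x => hψ x⟩
  obtain ⟨k, hk⟩ := Module.projective_lifting_property fdual (toHomP h) hfds
  obtain ⟨g, hg⟩ := hW (toHomX k)
  refine ⟨g.comp f, ?_⟩
  ext x p
  have h1 : dualMap S R E ζ (g (f x)) p = toHomX k (f x) p :=
    LinearMap.congr_fun (LinearMap.congr_fun hg (f x)) p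
  have h2 : k p (f x) = toHomP h p x := LinearMap.congr_fun (LinearMap.congr_fun hk p) x
  exact h1.trans h2
end L4

/-- For a projective presentation `P₂ → P₁ →ζ→ P₀ → M → 0` of a left `R`-module `M` by finitely
presented projectives: if `M` is silting with respect to `ζ` (i.e. `Gen M = 𝒟_ζ`), then `M^d` is
cosilting with respect to `ζ^d` (i.e. `Cogen (M^d) = 𝓑_{ζ^d}`). -/
theorem stmt_13 {S : Type u} [CommRing S] {R : Type u'} [Ring R] [Algebra S R]
    (E : Type v) [AddCommGroup E] [Module S E] [Module.Injective S E]
    (hcog : ∀ (N : Type v) [AddCommGroup N] [Module S N],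
      ∃ (ι : Type v) (f : N →ₗ[S] (ι → E)), Injective f)
    (P₂ P₁ P₀ M : Type v)
    [AddCommGroup P₂] [Module R P₂] [Module.Projective R P₂] [Module.FinitePresentation R P₂]
    [AddCommGroup P₁] [Module S P₁] [Module R P₁] [IsScalarTower S R P₁]
    [Module.Projective R P₁] [Module.FinitePresentation R P₁]
    [AddCommGroup P₀] [Module S P₀] [Module R P₀] [IsScalarTower S R P₀]
    [Module.Projective R P₀] [Module.FinitePresentation R P₀]
    [AddCommGroup M] [Module S M] [Module R M] [IsScalarTower S R M]
    (d : P₂ →ₗ[R] P₁) (ζ : P₁ →ₗ[R] P₀) (π : P₀ →ₗ[R] M)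
    (hπ : Surjective π) (hexζ : LinearMap.range ζ = LinearMap.ker π)
    (hexd : LinearMap.range d = LinearMap.ker ζ)
    (hsilting : ∀ (Y : Type v) [AddCommGroup Y] [Module R Y], MemGen R M Y ↔ MemD R ζ Y) :
    ∀ (X : Type v) [AddCommGroup X] [Module Rᵐᵒᵖ X],
      MemCogen Rᵐᵒᵖ (M →ₗ[S] E) X ↔ MemB Rᵐᵒᵖ (dualMap S R E ζ) X := by
  intro X _ _
  letI : Module S X := Module.compHom X (algebraMap S Rᵐᵒᵖ)
  haveI : IsScalarTower S Rᵐᵒᵖ X :=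
    ⟨fun s r x => by rw [Algebra.smul_def, mul_smul]; rfl⟩
  have hM : MemD R ζ M := (hsilting M).mp
    ⟨PUnit, Finsupp.lsum ℕ fun _ => (LinearMap.id : M →ₗ[R] M),
      fun m => ⟨Finsupp.single PUnit.unit m, by simp⟩⟩
  constructor
  · rintro ⟨ι, f, hf⟩
    exact memB_of_injective ζ f hf (memB_pi ζ hM)
  · intro hB
    exact memCogen_of_memGen hcog ((hsilting _).mpr ((memB_iff_memD ζ).mp hB))
end
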